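/- The unique root k₀ ∈ (0,1) of the equation 2E(k) − K(k) = 0 satisfies 1 − 2k₀² < 0, i.e. k₀ > 1/√2; consequently the number Y₀¹ = (1 − 2k₀²)/(2k₀√(1 − k₀²)) is negative. -/

import Mathlib

open Real Set Filter Topology

/-- Complete elliptic integral of the first kind. -/
noncomputable def K (k : ℝ) : ℝ :=
  ∫ t in (0:ℝ)..(π/2), 1 / Real.sqrt (1 - k^2 * Real.sin t ^ 2)

/-- Complete elliptic integral of the second kind. -/
noncomputable def E (k : ℝ) : ℝ :=
  ∫ t in (0:ℝ)..(π/2), Real.sqrt (1 - k^2 * Real.sin t ^ 2)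

/-! For `k² ≤ 1/2` the quantity `u = 1 - k² sin² t` exceeds `1/2` on `(0, π/2)`, so the integrand
`2√u - 1/√u = (2u - 1)/√u` of `2E(k) - K(k)` is positive there and `2E(k) - K(k) > 0`.
Hence the root `k₀` has `k₀² > 1/2`. -/

lemma one_half_lt_one_sub_sq_mul_sin_sq {k t : ℝ} (hk : k ^ 2 ≤ 1 / 2)
    (ht : t ∈ Ioo 0 (π / 2)) : 1 / 2 < 1 - k ^ 2 * sin t ^ 2 := by
  have hcos : 0 < cos t := cos_pos_of_mem_Ioo ⟨by linarith [ht.1, pi_pos], ht.2⟩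
  have hsin : sin t ^ 2 < 1 := by nlinarith [sin_sq_add_cos_sq t]
  nlinarith [sq_nonneg k]

lemma one_sub_sq_mul_sin_sq_pos {k : ℝ} (hk : k ^ 2 < 1) (t : ℝ) :
    0 < 1 - k ^ 2 * sin t ^ 2 := by
  nlinarith [sin_sq_le_one t, sq_nonneg (sin t)]

lemma two_mul_sqrt_sub_inv_sqrt_pos {u : ℝ} (hu : 1 / 2 < u) : 0 < 2 * √u - 1 / √u := by
  have hsqrt : 0 < √u := sqrt_pos.mpr (by linarith)
  have hsq : √u * √u = u := mul_self_sqrt (by linarith)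
  rw [sub_pos, div_lt_iff₀ hsqrt]
  nlinarith

section

variable {k : ℝ}

lemma continuous_sqrt_one_sub_sq_mul_sin_sq :
    Continuous fun t => √(1 - k ^ 2 * sin t ^ 2) := by
  fun_prop

lemma continuous_inv_sqrt_one_sub_sq_mul_sin_sq (hk : k ^ 2 < 1) :
    Continuous fun t => 1 / √(1 - k ^ 2 * sin t ^ 2) :=
  continuous_const.div continuous_sqrt_one_sub_sq_mul_sin_sq fun t =>
    (sqrt_pos.mpr (one_sub_sq_mul_sin_sq_pos hk t)).ne'

lemma two_mul_E_sub_K_eq_integral (hk : k ^ 2 < 1) :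
    2 * E k - K k =
      ∫ t in (0 : ℝ)..(π / 2), (2 * √(1 - k ^ 2 * sin t ^ 2) - 1 / √(1 - k ^ 2 * sin t ^ 2)) := by
  rw [E, K, ← intervalIntegral.integral_const_mul, ← intervalIntegral.integral_sub
    ((continuous_sqrt_one_sub_sq_mul_sin_sq.const_mul 2).intervalIntegrable _ _)
    ((continuous_inv_sqrt_one_sub_sq_mul_sin_sq hk).intervalIntegrable _ _)]

theorem two_mul_E_sub_K_pos (hk : k ^ 2 ≤ 1 / 2) : 0 < 2 * E k - K k := by
  have hk1 : k ^ 2 < 1 := by linarith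
  rw [two_mul_E_sub_K_eq_integral hk1]
  refine intervalIntegral.intervalIntegral_pos_of_pos_on
    (((continuous_sqrt_one_sub_sq_mul_sin_sq.const_mul 2).sub
      (continuous_inv_sqrt_one_sub_sq_mul_sin_sq hk1)).intervalIntegrable _ _)
    (fun t ht => two_mul_sqrt_sub_inv_sqrt_pos (one_half_lt_one_sub_sq_mul_sin_sq hk ht))
    (by positivity)

end

/-- The unique root `k₀ ∈ (0,1)` of `2E(k) − K(k) = 0` satisfies `1 − 2k₀² < 0`,
i.e. `k₀ > 1/√2`; consequently `Y₀¹ = (1 − 2k₀²)/(2k₀√(1 − k₀²)) < 0`. -/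
theorem k₀_gt_inv_sqrt_two (k₀ : ℝ) (hk₀ : k₀ ∈ Set.Ioo (0:ℝ) 1)
    (hroot : 2 * E k₀ - K k₀ = 0) :
    1 - 2 * k₀^2 < 0 ∧ 1 / Real.sqrt 2 < k₀ ∧
      (1 - 2 * k₀^2) / (2 * k₀ * Real.sqrt (1 - k₀^2)) < 0 := by
  obtain ⟨hpos, hlt⟩ := hk₀
  have hneg : 1 - 2 * k₀ ^ 2 < 0 := by
    by_contra! h
    exact (two_mul_E_sub_K_pos (by linarith)).ne' hroot
  have hgt : 1 / √2 < k₀ := by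
    rw [one_div, ← sqrt_inv, ← sqrt_sq hpos.le]
    exact sqrt_lt_sqrt (by norm_num) (by linarith)
  have hsqrt : 0 < √(1 - k₀ ^ 2) := sqrt_pos.mpr (by nlinarith)
  exact ⟨hneg, hgt, div_neg_of_neg_of_pos hneg (by positivity)⟩
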